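/- Under the setup, the constant coefficient a₀ of g satisfies a₀² = 0. -/

import Mathlib

open PowerSeries

/-- Substitution (composition) of formal power series: `pscomp f g` is `f ∘ g`,
i.e. the series `∑ₖ fₖ gᵏ`, whose `n`-th coefficient is the (finitely supported,
when the constant coefficient of `g` is nilpotent) sum `∑ᶠ k, fₖ · (coeff n gᵏ)`. -/
noncomputable def pscomp {A : Type*} [CommRing A] (f g : PowerSeries A) : PowerSeries A :=
  PowerSeries.mk fun n => ∑ᶠ k : ℕ, (coeff k f) * (coeff n (g ^ k))

/-! Put `w = u₁ ∘ g`. Composing `σ₁ · u₁ = X` with `g` and using `σ₁ ∘ g = g ∘ σ₂` gives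
`(g ∘ σ₂) · w = g`, while `w² = g² + y₁` says that `w² - g²` is constant. As
`σ₂ = X / u₂ = r⁻¹ X + O(X³)`, comparing coefficients of degree `≤ 2` yields polynomial relations
between `a₀, a₁, a₂`, `w₀, w₁, w₂` and `r`. Multiplied by `a₀`, they allow replacing `w₀` by `1`
and `w₁` by `a₀ a₁`; eliminating `w₂` then leaves `a₀² · T = 0` with `T ≡ 3 (mod m)`, and `3` is
a unit because `5 ∈ m`. -/

section PowerSeriesCoefficients

variable {A : Type*} [CommRing A]

theorem coeff_zero_mul_eq (φ ψ : A⟦X⟧) : coeff 0 (φ * ψ) = coeff 0 φ * coeff 0 ψ := by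
  simp [coeff_mul]

theorem coeff_one_mul_eq (φ ψ : A⟦X⟧) :
    coeff 1 (φ * ψ) = coeff 0 φ * coeff 1 ψ + coeff 1 φ * coeff 0 ψ := by
  simp [coeff_mul, Finset.Nat.antidiagonal_succ]

theorem coeff_two_mul_eq (φ ψ : A⟦X⟧) :
    coeff 2 (φ * ψ) = coeff 0 φ * coeff 2 ψ + coeff 1 φ * coeff 1 ψ + coeff 2 φ * coeff 0 ψ := by
  rw [coeff_mul, Finset.Nat.sum_antidiagonal_eq_sum_range_succ_mk]
  simp [Finset.sum_range_succ, add_assoc]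

theorem pscomp_eq_subst (f : A⟦X⟧) {g : A⟦X⟧} (hg : HasSubst g) : pscomp f g = f.subst g := by
  ext n
  simp [pscomp, coeff_subst' hg]

theorem coeff_subst_eq_sum_range (f : A⟦X⟧) {σ : A⟦X⟧} (hσ : constantCoeff σ = 0) (n : ℕ) :
    coeff n (f.subst σ) = ∑ k ∈ Finset.range (n + 1), coeff k f * coeff n (σ ^ k) := by
  rw [coeff_subst' (HasSubst.of_constantCoeff_zero' hσ)]
  refine finsum_eq_sum_of_support_subset _ fun k hk => ?_
  rw [Finset.coe_range, Set.mem_Iio]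
  by_contra! hnk
  have hdvd : X ^ k ∣ σ ^ k := pow_dvd_pow_of_dvd (X_dvd_iff.mpr hσ) k
  exact hk (by simp [X_pow_dvd_iff.mp hdvd n (by omega)])

section Subst

variable {f σ : A⟦X⟧} (hσ : constantCoeff σ = 0)
include hσ

theorem coeff_zero_subst : coeff 0 (f.subst σ) = coeff 0 f := by
  simp [coeff_subst_eq_sum_range f hσ]

theorem coeff_one_subst : coeff 1 (f.subst σ) = coeff 1 f * coeff 1 σ := by
  simp [coeff_subst_eq_sum_range f hσ, Finset.sum_range_succ]

theorem coeff_two_subst :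
    coeff 2 (f.subst σ) = coeff 1 f * coeff 2 σ + coeff 2 f * coeff 1 σ ^ 2 := by
  simp [coeff_subst_eq_sum_range f hσ, Finset.sum_range_succ, pow_two, coeff_two_mul_eq, hσ]

end Subst

section Squares

variable {φ ψ : A⟦X⟧} {y : A} (h : φ ^ 2 = ψ ^ 2 + C y)
include h

theorem coeff_zero_mul_coeff_one_eq_of_sq_eq_sq_add_C (h2 : IsUnit (2 : A)) :
    coeff 0 φ * coeff 1 φ = coeff 0 ψ * coeff 1 ψ := by
  have h1 := congrArg (coeff 1) h
  rw [pow_two, pow_two, map_add, coeff_one_mul_eq, coeff_one_mul_eq, coeff_C,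
    if_neg one_ne_zero, add_zero] at h1
  have h1' : 2 * (coeff 0 φ * coeff 1 φ - coeff 0 ψ * coeff 1 ψ) = 0 := by
    linear_combination h1
  linear_combination h2.mul_right_eq_zero.mp h1'

theorem coeff_two_eq_of_sq_eq_sq_add_C :
    2 * coeff 0 φ * coeff 2 φ + coeff 1 φ ^ 2 = 2 * coeff 0 ψ * coeff 2 ψ + coeff 1 ψ ^ 2 := by
  have h2 := congrArg (coeff 2) h
  rw [pow_two, pow_two, map_add, coeff_two_mul_eq, coeff_two_mul_eq, coeff_C,
    if_neg two_ne_zero, add_zero] at h2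
  linear_combination h2

end Squares

theorem coeff_one_eq_zero_of_sq_eq_X_sq_add_C {u : A⟦X⟧} {y : A} (h2 : IsUnit (2 : A))
    (hu₀ : IsUnit (constantCoeff u)) (hu : u ^ 2 = X ^ 2 + C y) : coeff 1 u = 0 := by
  have h1 := coeff_zero_mul_coeff_one_eq_of_sq_eq_sq_add_C hu h2
  rw [coeff_zero_X, zero_mul, coeff_zero_eq_constantCoeff_apply] at h1
  exact hu₀.mul_right_eq_zero.mp h1

section MulEqX

variable {σ u : A⟦X⟧} (h : σ * u = X)
include h

theorem constantCoeff_eq_zero_of_mul_eq_X (hu₀ : IsUnit (constantCoeff u)) :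
    constantCoeff σ = 0 := by
  have h0 := congrArg constantCoeff h
  rw [map_mul, constantCoeff_X] at h0
  exact hu₀.mul_left_eq_zero.mp h0

theorem coeff_one_mul_constantCoeff_of_mul_eq_X (hσ₀ : constantCoeff σ = 0) :
    coeff 1 σ * constantCoeff u = 1 := by
  have h1 := congrArg (coeff 1) h
  rwa [coeff_one_mul_eq, coeff_zero_eq_constantCoeff_apply, hσ₀, zero_mul, zero_add,
    coeff_zero_eq_constantCoeff_apply, coeff_one_X] at h1

theorem coeff_two_eq_zero_of_mul_eq_X (hu₀ : IsUnit (constantCoeff u)) (hu₁ : coeff 1 u = 0) :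
    coeff 2 σ = 0 := by
  have h2 := congrArg (coeff 2) h
  rw [coeff_two_mul_eq, coeff_zero_eq_constantCoeff_apply,
    constantCoeff_eq_zero_of_mul_eq_X h hu₀, hu₁, coeff_X, if_neg (by decide),
    coeff_zero_eq_constantCoeff_apply] at h2
  exact hu₀.mul_left_eq_zero.mp (by linear_combination h2)

end MulEqX

theorem sq_mul_eq_zero_of_coeff_relations {a₀ a₁ a₂ w₀ w₁ w₂ p r : A}
    (ha₁ : IsUnit a₁) (hpr : p * r = 1)
    (hK₀ : a₀ * w₀ = a₀) (hK₁ : a₀ * w₁ + a₁ * p * w₀ = a₁)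
    (hK₂ : a₀ * w₂ + a₁ * p * w₁ + a₂ * p ^ 2 * w₀ = a₂)
    (hw₁ : w₀ * w₁ = a₀ * a₁) (hw₂ : 2 * w₀ * w₂ + w₁ ^ 2 = 2 * a₀ * a₂ + a₁ ^ 2) :
    a₀ ^ 2 * (a₁ ^ 2 * (r + 2) - 2 * a₀ * a₂ - r * a₀ ^ 2 * a₁ ^ 2) = 0 := by
  have ha₀w₁ : a₀ * w₁ = a₀ ^ 2 * a₁ := by linear_combination a₀ * hw₁ - w₁ * hK₀
  have ha₀r : a₀ * r = a₀ + r * a₀ ^ 3 := by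
    have h : a₁ * (a₀ * r - a₀ - r * a₀ ^ 3) = 0 := by
      linear_combination a₁ * hK₀ + a₁ * a₀ * w₀ * hpr + r * a₀ * ha₀w₁ - a₀ * r * hK₁
    linear_combination ha₁.mul_right_eq_zero.mp h
  have ha₀w₂ : 2 * a₀ * w₂ = 2 * a₀ ^ 2 * a₂ + a₀ * a₁ ^ 2 - a₀ ^ 3 * a₁ ^ 2 := by
    linear_combination a₀ * hw₂ - 2 * w₂ * hK₀ - (w₁ + a₀ * a₁) * ha₀w₁
  have hK₂r : r ^ 2 * a₀ ^ 2 * w₂ + r * a₀ ^ 2 * a₁ ^ 2 + a₀ * a₂ = r ^ 2 * a₀ * a₂ := by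
    linear_combination r ^ 2 * a₀ * hK₂ - r ^ 2 * a₁ * p * ha₀w₁ - r ^ 2 * a₂ * p ^ 2 * hK₀
      - r * a₀ ^ 2 * a₁ ^ 2 * hpr - (p * r + 1) * a₀ * a₂ * hpr
  have key : r * (a₀ ^ 2 * (a₁ ^ 2 * (r + 2) - 2 * a₀ * a₂ - r * a₀ ^ 2 * a₁ ^ 2)) = 0 := by
    linear_combination 2 * hK₂r - r ^ 2 * a₀ * ha₀w₂ + 2 * a₂ * (r + 1) * ha₀r
  linear_combination p * key - a₀ ^ 2 * (a₁ ^ 2 * (r + 2) - 2 * a₀ * a₂ - r * a₀ ^ 2 * a₁ ^ 2) * hpr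

theorem sq_coeff_zero_mul_eq_zero_of_subst_mul_eq {g σ w : A⟦X⟧} {y r : A}
    (h2 : IsUnit (2 : A)) (hg₁ : IsUnit (coeff 1 g)) (hσ₀ : constantCoeff σ = 0)
    (hσ₁ : coeff 1 σ * r = 1) (hσ₂ : coeff 2 σ = 0)
    (hK : g.subst σ * w = g) (hw : w ^ 2 = g ^ 2 + C y) :
    coeff 0 g ^ 2 * (coeff 1 g ^ 2 * (r + 2) - 2 * coeff 0 g * coeff 2 g
      - r * coeff 0 g ^ 2 * coeff 1 g ^ 2) = 0 := by
  have hK₀ := congrArg (coeff 0) hK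
  have hK₁ := congrArg (coeff 1) hK
  have hK₂ := congrArg (coeff 2) hK
  rw [coeff_zero_mul_eq, coeff_zero_subst hσ₀] at hK₀
  rw [coeff_one_mul_eq, coeff_zero_subst hσ₀, coeff_one_subst hσ₀] at hK₁
  rw [coeff_two_mul_eq, coeff_zero_subst hσ₀, coeff_one_subst hσ₀, coeff_two_subst hσ₀,
    hσ₂] at hK₂
  refine sq_mul_eq_zero_of_coeff_relations hg₁ hσ₁ hK₀ (by linear_combination hK₁)
    (by linear_combination hK₂) ?_ (coeff_two_eq_of_sq_eq_sq_add_C hw)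
  exact coeff_zero_mul_coeff_one_eq_of_sq_eq_sq_add_C hw h2

end PowerSeriesCoefficients

section LocalRing

open IsLocalRing

variable {A : Type*} [CommRing A] [IsLocalRing A]

theorem residue_eq_of_sub_mem_maximalIdeal {a b : A} (h : a - b ∈ maximalIdeal A) :
    residue A a = residue A b := by
  rwa [← sub_eq_zero, ← map_sub, residue_eq_zero_iff]

theorem isUnit_of_sub_mem_maximalIdeal {a b : A} (hb : IsUnit b) (h : a - b ∈ maximalIdeal A) :
    IsUnit a := by
  rwa [← residue_ne_zero_iff_isUnit, residue_eq_of_sub_mem_maximalIdeal h,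
    residue_ne_zero_iff_isUnit]

end LocalRing

theorem a0_sq_eq_zero_general {A : Type*} [CommRing A] [IsLocalRing A] [IsArtinianRing A]
    (h5 : (5 : A) ∈ IsLocalRing.maximalIdeal A)
    (y₁ y₂ : A)
    (u₁ u₂ σ₁ σ₂ g : PowerSeries A)
    (hu₁ : u₁ ^ 2 = X ^ 2 + C y₁)
    (hu₂ : u₂ ^ 2 = X ^ 2 + C y₂)
    (hu₂0 : constantCoeff u₂ - 1 ∈ IsLocalRing.maximalIdeal A)
    (hσ₁ : σ₁ * u₁ = X)
    (hσ₂ : σ₂ * u₂ = X)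
    (hg0 : coeff 0 g ∈ IsLocalRing.maximalIdeal A)
    (hg1 : coeff 1 g - 1 ∈ IsLocalRing.maximalIdeal A)
    (hconj : pscomp σ₁ g = pscomp g σ₂) :
    (coeff 0 g) ^ 2 = 0 := by
  have h6 : IsUnit (2 * 3 : A) := isUnit_of_sub_mem_maximalIdeal isUnit_one (by norm_num [h5])
  have h2 : IsUnit (2 : A) := isUnit_of_mul_isUnit_left h6
  have hr : IsUnit (constantCoeff u₂) := isUnit_of_sub_mem_maximalIdeal isUnit_one hu₂0
  have hg : HasSubst g := show IsNilpotent (constantCoeff g) from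
    Ring.KrullDimLE.isNilpotent_iff_mem_maximalIdeal.mpr
      (by rwa [← coeff_zero_eq_constantCoeff_apply])
  have hσ₂0 := constantCoeff_eq_zero_of_mul_eq_X hσ₂ hr
  have hK : g.subst σ₂ * u₁.subst g = g := by
    rw [← pscomp_eq_subst g (HasSubst.of_constantCoeff_zero' hσ₂0), ← hconj,
      pscomp_eq_subst σ₁ hg, ← subst_mul hg, hσ₁, subst_X hg]
  have hw : (u₁.subst g) ^ 2 = g ^ 2 + C y₁ := by
    rw [← subst_pow hg, hu₁, subst_add hg, subst_pow hg, subst_X hg, subst_C]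
    rfl
  have hT := sq_coeff_zero_mul_eq_zero_of_subst_mul_eq h2
    (isUnit_of_sub_mem_maximalIdeal isUnit_one hg1) hσ₂0
    (coeff_one_mul_constantCoeff_of_mul_eq_X hσ₂ hσ₂0)
    (coeff_two_eq_zero_of_mul_eq_X hσ₂ hr (coeff_one_eq_zero_of_sq_eq_X_sq_add_C h2 hr hu₂))
    hK hw
  refine (IsUnit.mul_left_eq_zero ?_).mp hT
  refine isUnit_of_sub_mem_maximalIdeal (isUnit_of_mul_isUnit_right h6) ?_
  rw [← IsLocalRing.residue_eq_zero_iff]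
  have ha₀ : IsLocalRing.residue A (coeff 0 g) = 0 := (IsLocalRing.residue_eq_zero_iff _).mpr hg0
  simp only [map_sub, map_mul, map_add, map_pow, map_ofNat, ha₀,
    residue_eq_of_sub_mem_maximalIdeal hg1, residue_eq_of_sub_mem_maximalIdeal hu₂0]
  norm_num

theorem a0_sq_eq_zero {A : Type*} [CommRing A] [IsLocalRing A] [IsArtinianRing A]
    (h5 : (5 : A) ∈ IsLocalRing.maximalIdeal A)
    (y₁ y₂ : A)
    (hy₁ : 1 + y₁ + y₁ ^ 2 + y₁ ^ 3 + y₁ ^ 4 = 0)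
    (hy₂ : 1 + y₂ + y₂ ^ 2 + y₂ ^ 3 + y₂ ^ 4 = 0)
    (hy₁m : y₁ - 1 ∈ IsLocalRing.maximalIdeal A)
    (hy₂m : y₂ - 1 ∈ IsLocalRing.maximalIdeal A)
    (u₁ u₂ σ₁ σ₂ g : PowerSeries A)
    (hu₁ : u₁ ^ 2 = X ^ 2 + C y₁)
    (hu₂ : u₂ ^ 2 = X ^ 2 + C y₂)
    (hu₁0 : constantCoeff u₁ - 1 ∈ IsLocalRing.maximalIdeal A)
    (hu₂0 : constantCoeff u₂ - 1 ∈ IsLocalRing.maximalIdeal A)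
    (hσ₁ : σ₁ * u₁ = X)
    (hσ₂ : σ₂ * u₂ = X)
    (hg0 : coeff 0 g ∈ IsLocalRing.maximalIdeal A)
    (hg1 : coeff 1 g - 1 ∈ IsLocalRing.maximalIdeal A)
    (hgn : ∀ n, 2 ≤ n → coeff n g ∈ IsLocalRing.maximalIdeal A)
    (hconj : pscomp σ₁ g = pscomp g σ₂) :
    (coeff 0 g) ^ 2 = 0 :=
  a0_sq_eq_zero_general h5 y₁ y₂ u₁ u₂ σ₁ σ₂ g hu₁ hu₂ hu₂0 hσ₁ hσ₂ hg0 hg1 hconj
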